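/- Let V : I → ℝ^N be a solution of the volume-scavenging system on an open interval I. Then for all t ∈ I, (d/dt) 𝒲(V(t)) = −(1/(2N)) Σ_{i,j=1}^N c_{i,j} |P(V_i(t)) − P(V_j(t))|^{s+1}. In particular, (d/dt) 𝒲(V(t)) ≤ 0 for all t ∈ I, and (d/dt) 𝒲(V(t₀)) = 0 at some t₀ ∈ I if and only if V(t₀) is an equilibrium of the system (i.e. the right-hand side of the system vanishes at V(t₀)). -/

import Mathlib

/-- Droplet volume as a function of height: v(h) = h(h²+3)/4. -/
noncomputable def vol (h : ℝ) : ℝ := h * (h ^ 2 + 3) / 4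

/-- Droplet pressure as a function of height: p(h) = 4h/(h²+1). -/
noncomputable def pres (h : ℝ) : ℝ := 4 * h / (h ^ 2 + 1)

/-- Pressure as a function of volume: P(V) = p(h) where v(h) = V
(v is a strictly increasing bijection of ℝ, so its inverse is well defined). -/
noncomputable def Pfun (V : ℝ) : ℝ := pres (Function.invFun vol V)

/-- Δ_s(x) = |x|^s sgn(x). -/
noncomputable def Ds (s x : ℝ) : ℝ := |x| ^ s * Real.sign x

/-- The energy functional 𝒲(V) = (1/N) Σ_j ∫_0^{V_j} P(u) du. -/
noncomputable def Wfun (N : ℕ) (V : Fin N → ℝ) : ℝ :=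
  (1 / (N : ℝ)) * ∑ j, ∫ u in (0 : ℝ)..(V j), Pfun u

/-!
Along a solution, the chain rule and the fundamental theorem of calculus give
`d/dt 𝒲 = (1/N) Σ_j P_j V_j'`. Since `c` is symmetric and `Δ_s` is odd, exchanging `i` and `j`
symmetrizes `Σ_j P_j Σ_i c_{ij} Δ_s(P_i - P_j)` to `-(1/2) Σ c_{ij} (P_i - P_j) Δ_s(P_i - P_j)`,
and `x Δ_s(x) = |x|^{s+1}`. The terms of this sum are nonnegative, so it vanishes only if
`c_{ij} = 0` or `P_i = P_j` for every pair, which kills every flux; conversely, at an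
equilibrium the symmetrized identity shows that it is `0`.
-/

open Filter Finset

lemma vol_strictMono : StrictMono vol := by
  have h : vol = fun x => (x ^ 3 + 3 * x) / 4 := by
    funext x; unfold vol; ring
  rw [h]
  exact ((Odd.strictMono_pow (by decide : Odd 3)).add
    (strictMono_id.const_mul (by norm_num : (0 : ℝ) < 3))).div_const (by norm_num)

lemma continuous_vol : Continuous vol := by
  unfold vol; fun_prop

lemma vol_surjective : Function.Surjective vol := by
  refine continuous_vol.surjective ?_ ?_
  · refine tendsto_atTop_mono' _ ?_ (tendsto_id.const_mul_atTop (by norm_num : (0 : ℝ) < 3 / 4))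
    filter_upwards [eventually_ge_atTop 0] with h hh
    simp only [vol, id]; nlinarith [pow_nonneg hh 3]
  · refine tendsto_atBot_mono' _ ?_ (tendsto_id.const_mul_atBot (by norm_num : (0 : ℝ) < 3 / 4))
    filter_upwards [eventually_le_atBot 0] with h hh
    simp only [vol, id]; nlinarith [pow_nonneg (neg_nonneg.2 hh) 3]

lemma continuous_invFun_vol : Continuous (Function.invFun vol) := by
  refine Monotone.continuous_of_surjective (fun x y hxy => ?_)
    (Function.leftInverse_invFun vol_strictMono.injective).surjective
  rwa [← vol_strictMono.le_iff_le, Function.invFun_eq (vol_surjective x),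
    Function.invFun_eq (vol_surjective y)]

lemma continuous_Pfun : Continuous Pfun := by
  have hpres : Continuous pres := by
    unfold pres
    exact Continuous.div (by fun_prop) (by fun_prop) fun h => by positivity
  exact hpres.comp continuous_invFun_vol

lemma Ds_neg (s x : ℝ) : Ds s (-x) = -Ds s x := by
  rw [Ds, Ds, abs_neg, Real.sign_neg, mul_neg]

lemma mul_sign_self (x : ℝ) : x * Real.sign x = |x| := by
  rcases lt_trichotomy x 0 with hx | rfl | hx
  · rw [Real.sign_of_neg hx, abs_of_neg hx, mul_neg_one]
  · rw [Real.sign_zero, mul_zero, abs_zero]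
  · rw [Real.sign_of_pos hx, abs_of_pos hx, mul_one]

lemma mul_Ds_self {s : ℝ} (hs : 0 < s) (x : ℝ) : x * Ds s x = |x| ^ (s + 1) := by
  rcases eq_or_ne x 0 with rfl | hx
  · rw [zero_mul, abs_zero, Real.zero_rpow (by linarith)]
  · rw [Ds, mul_left_comm, mul_sign_self, Real.rpow_add_one (abs_ne_zero.2 hx)]

section WeightedGraph

variable {ι : Type*} [Fintype ι] {c : ι → ι → ℝ} {φ : ℝ → ℝ}

lemma sum_mul_sum_flux_eq (hc : ∀ i j, c i j = c j i) (hφ : ∀ x, φ (-x) = -φ x) (P : ι → ℝ) :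
    ∑ j, P j * ∑ i, c i j * φ (P i - P j) =
      -(1 / 2) * ∑ i, ∑ j, c i j * ((P i - P j) * φ (P i - P j)) := by
  have hswap : ∑ j, P j * ∑ i, c i j * φ (P i - P j) =
      -∑ i, P i * ∑ j, c i j * φ (P i - P j) := by
    simp only [mul_sum, ← sum_neg_distrib]
    refine sum_congr rfl fun j _ => sum_congr rfl fun i _ => ?_
    rw [hc, ← neg_sub, hφ]; ring
  have hdiff : ∑ j, P j * ∑ i, c i j * φ (P i - P j) - ∑ i, P i * ∑ j, c i j * φ (P i - P j) =
      -∑ i, ∑ j, c i j * ((P i - P j) * φ (P i - P j)) := by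
    simp only [mul_sum, ← sum_neg_distrib]
    rw [sum_comm, ← sum_sub_distrib]
    refine sum_congr rfl fun i _ => ?_
    rw [← sum_sub_distrib]
    refine sum_congr rfl fun j _ => ?_
    ring
  linarith

lemma sum_sum_flux_eq_zero_iff (hc : ∀ i j, c i j = c j i) (hc0 : ∀ i j, 0 ≤ c i j)
    (hφ : ∀ x, φ (-x) = -φ x) (hφ0 : ∀ x, 0 ≤ x * φ x) (P : ι → ℝ) :
    ∑ i, ∑ j, c i j * ((P i - P j) * φ (P i - P j)) = 0 ↔
      ∀ j, ∑ i, c i j * φ (P i - P j) = 0 := by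
  have hterm_nonneg : ∀ i j, 0 ≤ c i j * ((P i - P j) * φ (P i - P j)) :=
    fun i j => mul_nonneg (hc0 i j) (hφ0 _)
  constructor
  · intro h j
    have hφ_zero : φ 0 = 0 := self_eq_neg.1 (by simpa using hφ 0)
    have hterm : ∀ i, c i j * ((P i - P j) * φ (P i - P j)) = 0 := fun i =>
      (sum_eq_zero_iff_of_nonneg fun j _ => hterm_nonneg i j).1
        ((sum_eq_zero_iff_of_nonneg fun i _ => sum_nonneg fun j _ => hterm_nonneg i j).1 h i
          (mem_univ i)) j (mem_univ j)
    refine sum_eq_zero fun i _ => ?_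
    rcases mul_eq_zero.1 (hterm i) with hcij | hdiff
    · rw [hcij, zero_mul]
    · rcases mul_eq_zero.1 hdiff with hP | hφP
      · rw [hP, hφ_zero, mul_zero]
      · rw [hφP, mul_zero]
  · intro h
    have := sum_mul_sum_flux_eq hc hφ P
    simp only [h, mul_zero, sum_const_zero] at this
    linarith

end WeightedGraph

lemma hasDerivAt_sum_integral {ι : Type*} [Fintype ι] {f : ℝ → ℝ} (hf : Continuous f)
    {V : ℝ → ι → ℝ} {V' : ι → ℝ} {t : ℝ} (hV : ∀ j, HasDerivAt (fun τ => V τ j) (V' j) t) :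
    HasDerivAt (fun τ => ∑ j, ∫ u in (0 : ℝ)..V τ j, f u) (∑ j, f (V t j) * V' j) t :=
  HasDerivAt.fun_sum fun j _ =>
    (hf.integral_hasStrictDerivAt 0 (V t j)).hasDerivAt.comp
      (h₂ := fun x => ∫ u in (0 : ℝ)..x, f u) t (hV j)

lemma hasDerivAt_Wfun {N : ℕ} {V : ℝ → Fin N → ℝ} {V' : Fin N → ℝ} {t : ℝ}
    (hV : ∀ j, HasDerivAt (fun τ => V τ j) (V' j) t) :
    HasDerivAt (fun τ => Wfun N (V τ)) (1 / (N : ℝ) * ∑ j, Pfun (V t j) * V' j) t :=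
  (hasDerivAt_sum_integral continuous_Pfun hV).const_mul _

theorem stmt9_general (N : ℕ) (hN : 2 ≤ N) (s : ℝ) (hs : 0 < s)
    (c : Fin N → Fin N → ℝ)
    (hsymm : ∀ i j, c i j = c j i)
    (hnonneg : ∀ i j, 0 ≤ c i j)
    (I : Set ℝ)
    (V : ℝ → Fin N → ℝ)
    (hsol : ∀ t ∈ I, ∀ j, HasDerivAt (fun τ => V τ j)
      (∑ i, c i j * Ds s (Pfun (V t i) - Pfun (V t j))) t) :
    (∀ t ∈ I, HasDerivAt (fun τ => Wfun N (V τ))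
      (-(1 / (2 * (N : ℝ))) *
        ∑ i, ∑ j, c i j * |Pfun (V t i) - Pfun (V t j)| ^ (s + 1)) t) ∧
    (∀ t ∈ I,
      -(1 / (2 * (N : ℝ))) *
        ∑ i, ∑ j, c i j * |Pfun (V t i) - Pfun (V t j)| ^ (s + 1) ≤ 0) ∧
    (∀ t₀ ∈ I,
      (-(1 / (2 * (N : ℝ))) *
        ∑ i, ∑ j, c i j * |Pfun (V t₀ i) - Pfun (V t₀ j)| ^ (s + 1) = 0 ↔
        ∀ j, ∑ i, c i j * Ds s (Pfun (V t₀ i) - Pfun (V t₀ j)) = 0)) := by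
  simp only [← mul_Ds_self hs]
  have hDs_nonneg : ∀ x, 0 ≤ x * Ds s x := fun x => (mul_Ds_self hs x).symm ▸ by positivity
  have hcoef : 0 < 1 / (2 * (N : ℝ)) := by
    have : 0 < N := by omega
    positivity
  refine ⟨fun t ht => ?_, fun t _ => ?_, fun t _ => ?_⟩
  · convert hasDerivAt_Wfun (hsol t ht) using 1
    rw [sum_mul_sum_flux_eq hsymm (Ds_neg s)]
    ring
  · exact mul_nonpos_of_nonpos_of_nonneg (by linarith)
      (sum_nonneg fun i _ => sum_nonneg fun j _ => mul_nonneg (hnonneg i j) (hDs_nonneg _))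
  · rw [mul_eq_zero, or_iff_right (by linarith),
      sum_sum_flux_eq_zero_iff hsymm hnonneg (Ds_neg s) hDs_nonneg]

theorem stmt9 (N : ℕ) (hN : 2 ≤ N) (s : ℝ) (hs : 0 < s)
    (c : Fin N → Fin N → ℝ)
    (hsymm : ∀ i j, c i j = c j i)
    (hnonneg : ∀ i j, 0 ≤ c i j)
    (hdiag : ∀ i, c i i = 0)
    (hconn : (SimpleGraph.fromRel (fun i j => 0 < c i j)).Connected)
    (I : Set ℝ) (hIopen : IsOpen I) (hIord : I.OrdConnected)
    (V : ℝ → Fin N → ℝ)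
    (hsol : ∀ t ∈ I, ∀ j, HasDerivAt (fun τ => V τ j)
      (∑ i, c i j * Ds s (Pfun (V t i) - Pfun (V t j))) t) :
    (∀ t ∈ I, HasDerivAt (fun τ => Wfun N (V τ))
      (-(1 / (2 * (N : ℝ))) *
        ∑ i, ∑ j, c i j * |Pfun (V t i) - Pfun (V t j)| ^ (s + 1)) t) ∧
    (∀ t ∈ I,
      -(1 / (2 * (N : ℝ))) *
        ∑ i, ∑ j, c i j * |Pfun (V t i) - Pfun (V t j)| ^ (s + 1) ≤ 0) ∧
    (∀ t₀ ∈ I,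
      (-(1 / (2 * (N : ℝ))) *
        ∑ i, ∑ j, c i j * |Pfun (V t₀ i) - Pfun (V t₀ j)| ^ (s + 1) = 0 ↔
        ∀ j, ∑ i, c i j * Ds s (Pfun (V t₀ i) - Pfun (V t₀ j)) = 0)) :=
  stmt9_general N hN s hs c hsymm hnonneg I V hsol
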